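/- If S is a unital, cancellatively G-graded ring, then S_x ≠ {0} for every x ∈ G, i.e., Supp(S) = G. -/
import Mathlib


open Pointwise

/-- The product `UV` of two subsets of a ring: the additive subgroup consisting of all
finite sums of products `u * v` with `u ∈ U`, `v ∈ V`. -/
def setProd {S : Type*} [Ring S] (U V : Set S) : AddSubgroup S :=
  AddSubgroup.closure (U * V)

/-- A subset of a graded ring is homogeneous if it is contained in the union of the
homogeneous components. -/
def IsHomogeneousSubset {G : Type*} {S : Type*} [Ring S] (𝒮 : G → AddSubgroup S)
    (U : Set S) : Prop :=
  U ⊆ ⋃ x : G, (𝒮 x : Set S)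

lemma setProd_eq_bot {S : Type*} [Ring S] {U V : Set S} (h : U * V ⊆ {0}) :
    setProd U V = ⊥ := by
  apply le_antisymm _ bot_le
  rw [setProd, AddSubgroup.closure_le]
  intro a ha
  simpa using h ha

/-- If `S` is a unital (nonzero) `G`-graded ring which is cancellatively graded, i.e. for all
`x, y ∈ G` and all homogeneous subsets `U, V ⊆ S` the implication
`U S_x S_y V = {0} ⟹ U S_{xy} V = {0}` holds, then `S_x ≠ {0}` for every `x ∈ G`;
that is, `Supp(S) = G`. -/
theorem support_eq_of_cancellatively_graded {G : Type*} [Group G] [DecidableEq G]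
    {S : Type*} [Ring S] [Nontrivial S] (𝒮 : G → AddSubgroup S)
    [DirectSum.Decomposition 𝒮]
    (hmul : ∀ {x y : G} {a b : S}, a ∈ 𝒮 x → b ∈ 𝒮 y → a * b ∈ 𝒮 (x * y))
    (hone : (1 : S) ∈ 𝒮 (1 : G))
    (hcanc : ∀ (x y : G) (U V : Set S), IsHomogeneousSubset 𝒮 U → IsHomogeneousSubset 𝒮 V →
      setProd ((setProd ((setProd U (𝒮 x : Set S) : AddSubgroup S) : Set S)
          (𝒮 y : Set S) : AddSubgroup S) : Set S) V = ⊥ →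
      setProd ((setProd U (𝒮 (x * y) : Set S) : AddSubgroup S) : Set S) V = ⊥) :
    ∀ x : G, 𝒮 x ≠ ⊥ := by
  intro x hx
  have h1 : IsHomogeneousSubset 𝒮 ({1} : Set S) := by
    intro a ha
    rw [Set.mem_singleton_iff] at ha
    subst ha
    exact Set.mem_iUnion.2 ⟨1, hone⟩
  have step1 : setProd ({1} : Set S) (𝒮 x : Set S) = ⊥ := by
    apply setProd_eq_bot
    rintro a ⟨u, hu, v, hv, rfl⟩
    rw [hx] at hv
    simp only [AddSubgroup.coe_bot, Set.mem_singleton_iff] at hv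
    simp [hv]
  have step2 : setProd ((setProd ({1} : Set S) (𝒮 x : Set S) : AddSubgroup S) : Set S)
      (𝒮 x⁻¹ : Set S) = ⊥ := by
    apply setProd_eq_bot
    rintro a ⟨u, hu, v, hv, rfl⟩
    rw [step1] at hu
    simp only [AddSubgroup.coe_bot, Set.mem_singleton_iff] at hu
    simp [hu]
  have step3 : setProd ((setProd ((setProd ({1} : Set S) (𝒮 x : Set S) : AddSubgroup S) : Set S)
      (𝒮 x⁻¹ : Set S) : AddSubgroup S) : Set S) ({1} : Set S) = ⊥ := by
    apply setProd_eq_bot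
    rintro a ⟨u, hu, v, hv, rfl⟩
    rw [step2] at hu
    simp only [AddSubgroup.coe_bot, Set.mem_singleton_iff] at hu
    simp [hu]
  have key := hcanc x x⁻¹ {1} {1} h1 h1 step3
  rw [mul_inv_cancel] at key
  have h1mem : (1 : S) ∈ setProd ((setProd ({1} : Set S) (𝒮 (1 : G) : Set S) : AddSubgroup S) : Set S)
      ({1} : Set S) := by
    apply AddSubgroup.subset_closure
    refine ⟨1, ?_, 1, rfl, mul_one 1⟩
    exact AddSubgroup.subset_closure ⟨1, rfl, 1, hone, one_mul 1⟩
  rw [key, AddSubgroup.mem_bot] at h1mem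
  exact one_ne_zero h1mem
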